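/- arXiv:1301.1051 — 2 statements merged into one kernel-verified Lean document; each statement's English description precedes it below -/
import Mathlib

section
/- There exist 2^n general dyadic grids D_1, …, D_{2^n} in ℝ^n such that for every cube Q ⊂ ℝ^n with sides parallel to the axes there exist an index i ∈ {1, …, 2^n} and a cube Q_i ∈ D_i with Q ⊂ Q_i and ℓ_{Q_i} ≤ 6 ℓ_Q, where ℓ denotes sidelength. -/
open MeasureTheory ENNReal Set

noncomputable section

/-- An axis-parallel half-open cube in `ℝⁿ`, given by its lower corner and sidelength. -/
structure RCube (n : ℕ) where
  corner : Fin n → ℝ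
  side : ℝ

namespace RCube

/-- The set of points of a cube (half-open, so that dyadic cubes partition space). -/
def toSet {n : ℕ} (Q : RCube n) : Set (Fin n → ℝ) :=
  {x | ∀ i, Q.corner i ≤ x i ∧ x i < Q.corner i + Q.side}

/-- The concentric dilate `lQ` of a cube `Q`. -/
def dilate {n : ℕ} (Q : RCube n) (l : ℝ) : RCube n :=
  ⟨fun i => Q.corner i - (l - 1) * Q.side / 2, l * Q.side⟩

end RCube

/-- The average `f_Q = |Q|⁻¹ ∫_Q f` of a function over a cube. -/
def avg {n : ℕ} (f : (Fin n → ℝ) → ℝ) (Q : RCube n) : ℝ :=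
  (volume Q.toSet).toReal⁻¹ * ∫ y in Q.toSet, f y

/-- The `A_p` characteristic `[w]_{A_p}` of a weight `w`. -/
def ApChar {n : ℕ} (p : ℝ) (w : (Fin n → ℝ) → ℝ) : ℝ≥0∞ :=
  ⨆ (Q : RCube n) (_ : 0 < Q.side),
    ENNReal.ofReal (avg w Q * (avg (fun x => w x ^ (-(1 / (p - 1)))) Q) ^ (p - 1))

/-- The weighted norm `‖f‖_{L^p(w)}` of a real-valued function. -/
def wLp {n : ℕ} (p : ℝ) (w f : (Fin n → ℝ) → ℝ) : ℝ≥0∞ :=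
  (∫⁻ x, ENNReal.ofReal (|f x| ^ p * w x)) ^ (1 / p)

/-- The weighted norm `‖F‖_{L^p(w)}` of an `ℝ≥0∞`-valued function. -/
def wLpE {n : ℕ} (p : ℝ) (w : (Fin n → ℝ) → ℝ) (F : (Fin n → ℝ) → ℝ≥0∞) : ℝ≥0∞ :=
  (∫⁻ x, F x ^ p * ENNReal.ofReal (w x)) ^ (1 / p)

/-- The weighted weak norm `‖F‖_{L^{p,∞}(w)}`. -/
def wWeak {n : ℕ} (p : ℝ) (w : (Fin n → ℝ) → ℝ) (F : (Fin n → ℝ) → ℝ≥0∞) : ℝ≥0∞ :=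
  ⨆ (ξ : ℝ) (_ : 0 < ξ), ENNReal.ofReal ξ *
    (∫⁻ x in {x | ENNReal.ofReal ξ < F x}, ENNReal.ofReal (w x)) ^ (1 / p)

/-- The weak `L¹` quasinorm (with respect to Lebesgue measure). -/
def weakL1 {n : ℕ} (F : (Fin n → ℝ) → ℝ≥0∞) : ℝ≥0∞ :=
  ⨆ (ξ : ℝ) (_ : 0 < ξ), ENNReal.ofReal ξ * volume {x | ENNReal.ofReal ξ < F x}

/-- The `L¹` norm as a lower integral. -/
def normL1 {n : ℕ} (f : (Fin n → ℝ) → ℝ) : ℝ≥0∞ :=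
  ∫⁻ x, ENNReal.ofReal |f x|

/-- The dilation `ψ_t(x) = t^{-n} ψ(x/t)`. -/
def psit {n : ℕ} (ψ : (Fin n → ℝ) → ℝ) (t : ℝ) (x : Fin n → ℝ) : ℝ :=
  (t ^ n)⁻¹ * ψ fun i => x i / t

/-- Convolution `f * g (y) = ∫ f(ξ) g(y - ξ) dξ`. -/
def convol {n : ℕ} (f g : (Fin n → ℝ) → ℝ) (y : Fin n → ℝ) : ℝ :=
  ∫ ξ, f ξ * g (y - ξ)

/-- `ψ` is a standard kernel: integrable, mean zero, with size decay `(1+|x|)^{-(n+ε)}`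
and `L¹`-Hölder smoothness of order `ε`. -/
def StdKernel {n : ℕ} (ψ : (Fin n → ℝ) → ℝ) (ε : ℝ) : Prop :=
  Integrable ψ ∧ (∫ x, ψ x) = 0 ∧ 0 < ε ∧ ε ≤ 1 ∧
    ∃ c : ℝ, 0 < c ∧ (∀ x, |ψ x| ≤ c / (1 + ‖x‖) ^ ((n : ℝ) + ε)) ∧
      ∀ h : Fin n → ℝ, (∫ x, |ψ (x + h) - ψ x|) ≤ c * ‖h‖ ^ ε

/-- The cone `Γ_α(x)` of aperture `α` with vertex `x`. -/
def coneSet {n : ℕ} (α : ℝ) (x : Fin n → ℝ) : Set ((Fin n → ℝ) × ℝ) :=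
  {p | 0 < p.2 ∧ ‖p.1 - x‖ < α * p.2}

/-- The square function `S_{α,ψ}(f)`. -/
def Ssq {n : ℕ} (ψ : (Fin n → ℝ) → ℝ) (α : ℝ) (f : (Fin n → ℝ) → ℝ) (x : Fin n → ℝ) : ℝ≥0∞ :=
  (∫⁻ p in coneSet α x,
      ENNReal.ofReal ((convol f (psit ψ p.2) p.1) ^ 2 / p.2 ^ (n + 1))) ^ (1 / 2 : ℝ)

/-- The square function `S_α(F)` of a function `F` on the upper half-space. -/
def SsqF {n : ℕ} (α : ℝ) (F : (Fin n → ℝ) × ℝ → ℝ) (x : Fin n → ℝ) : ℝ≥0∞ :=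
  (∫⁻ p in coneSet α x, ENNReal.ofReal (F p ^ 2 / p.2 ^ (n + 1))) ^ (1 / 2 : ℝ)

/-- The Littlewood–Paley function `g*_{μ,ψ}(f)`. -/
def gstar {n : ℕ} (ψ : (Fin n → ℝ) → ℝ) (μ : ℝ) (f : (Fin n → ℝ) → ℝ) (x : Fin n → ℝ) : ℝ≥0∞ :=
  (∫⁻ p in {p : (Fin n → ℝ) × ℝ | 0 < p.2},
      ENNReal.ofReal ((p.2 / (p.2 + ‖x - p.1‖)) ^ (μ * n) *
        (convol f (psit ψ p.2) p.1) ^ 2 / p.2 ^ (n + 1))) ^ (1 / 2 : ℝ)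

/-- `Φ` is a Schwartz function with `χ_{B(0,1)} ≤ Φ ≤ χ_{B(0,2)}`. -/
def IsAdaptedBump {n : ℕ} (Φ : (Fin n → ℝ) → ℝ) : Prop :=
  (∃ Φ' : SchwartzMap (Fin n → ℝ) ℝ, ∀ x, Φ' x = Φ x) ∧
    ∀ x, (Metric.closedBall (0 : Fin n → ℝ) 1).indicator (fun _ => (1 : ℝ)) x ≤ Φ x ∧
      Φ x ≤ (Metric.closedBall (0 : Fin n → ℝ) 2).indicator (fun _ => (1 : ℝ)) x

/-- The smooth square function `S̃_{α,ψ}(f)`. -/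
def SsqSmooth {n : ℕ} (ψ Φ : (Fin n → ℝ) → ℝ) (α : ℝ) (f : (Fin n → ℝ) → ℝ)
    (x : Fin n → ℝ) : ℝ≥0∞ :=
  (∫⁻ p in {p : (Fin n → ℝ) × ℝ | 0 < p.2},
      ENNReal.ofReal (Φ (fun i => (x i - p.1 i) / (p.2 * α)) *
        (convol f (psit ψ p.2) p.1) ^ 2 / p.2 ^ (n + 1))) ^ (1 / 2 : ℝ)

/-- A general dyadic grid: sidelengths are powers of two, any two cubes are nested or
disjoint, and the cubes of a fixed sidelength partition `ℝⁿ`. -/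
def IsDyadicGrid {n : ℕ} (D : Set (RCube n)) : Prop :=
  (∀ Q ∈ D, ∃ k : ℤ, Q.side = (2 : ℝ) ^ k) ∧
  (∀ Q ∈ D, ∀ R ∈ D, Q.toSet ∩ R.toSet = Q.toSet ∨ Q.toSet ∩ R.toSet = R.toSet ∨
      Q.toSet ∩ R.toSet = ∅) ∧
  ∀ k : ℤ, ∀ x : Fin n → ℝ, ∃! Q : RCube n, (Q ∈ D ∧ Q.side = (2 : ℝ) ^ k) ∧ x ∈ Q.toSet

/-- The standard dyadic grid `𝒟`, consisting of the cubes `2^{-k}([0,1)ⁿ + j)`. -/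
def stdGrid (n : ℕ) : Set (RCube n) :=
  {Q | ∃ (k : ℤ) (j : Fin n → ℤ), Q.side = (2 : ℝ) ^ (-k) ∧
      Q.corner = fun i => (2 : ℝ) ^ (-k) * (j i : ℝ)}

/-- The family `𝒟(Q₀)` of dyadic subcubes of a cube `Q₀`. -/
def dyadicSub {n : ℕ} (Q0 : RCube n) : Set (RCube n) :=
  {Q | ∃ (k : ℕ) (j : Fin n → ℕ), (∀ i, j i < 2 ^ k) ∧ Q.side = Q0.side / 2 ^ k ∧
      Q.corner = fun i => Q0.corner i + (j i : ℝ) * (Q0.side / 2 ^ k)}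

/-- A sparse family `{Q_j^k}` of cubes, indexed by the level `k`. -/
def IsSparse {n : ℕ} (S : ℤ → Set (RCube n)) : Prop :=
  (∀ k, (S k).PairwiseDisjoint RCube.toSet) ∧
  (∀ k, (⋃ Q ∈ S (k + 1), Q.toSet) ⊆ ⋃ Q ∈ S k, Q.toSet) ∧
  ∀ k, ∀ Q ∈ S k, volume ((⋃ R ∈ S (k + 1), R.toSet) ∩ Q.toSet) ≤ volume Q.toSet / 2

/-- The sparse square operator `𝒯^S_{2,m} f = (Σ_{j,k} (f_{2^m Q_j^k})² χ_{Q_j^k})^{1/2}`. -/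
def sparseT2 {n : ℕ} (S : ℤ → Set (RCube n)) (m : ℕ) (f : (Fin n → ℝ) → ℝ)
    (x : Fin n → ℝ) : ℝ≥0∞ :=
  (∑' (k : ℤ) (Q : S k), (Q : RCube n).toSet.indicator
      (fun _ => ENNReal.ofReal ((avg f ((Q : RCube n).dilate (2 ^ m))) ^ 2)) x) ^ (1 / 2 : ℝ)

/-- The non-increasing rearrangement `g*(t) = inf {a > 0 : |{|g| > a}| < t}`. -/
def rearr {n : ℕ} (g : (Fin n → ℝ) → ℝ) (t : ℝ) : ℝ :=
  sInf {a : ℝ | 0 < a ∧ volume {x | a < |g x|} < ENNReal.ofReal t}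

/-- The local mean oscillation `ω_λ(f; Q) = inf_c ((f-c)χ_Q)*(λ|Q|)`. -/
def oscil {n : ℕ} (lam : ℝ) (f : (Fin n → ℝ) → ℝ) (Q : RCube n) : ℝ :=
  ⨅ c : ℝ, rearr (Q.toSet.indicator fun x => f x - c) (lam * (volume Q.toSet).toReal)

/-- `m` is a median value of `f` over the cube `Q`. -/
def IsMedian {n : ℕ} (f : (Fin n → ℝ) → ℝ) (Q : RCube n) (m : ℝ) : Prop :=
  volume {x ∈ Q.toSet | m < f x} ≤ volume Q.toSet / 2 ∧
    volume {x ∈ Q.toSet | f x < m} ≤ volume Q.toSet / 2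

/-- The maximal median value of `f` over `Q`. -/
def medianMax {n : ℕ} (f : (Fin n → ℝ) → ℝ) (Q : RCube n) : ℝ :=
  sSup {m | IsMedian f Q m}

/-- The dyadic local sharp maximal function `m^{#,d}_{λ;Q₀} f`. -/
def sharpMax {n : ℕ} (lam : ℝ) (Q0 : RCube n) (f : (Fin n → ℝ) → ℝ) (x : Fin n → ℝ) : ℝ :=
  sSup {r | ∃ Q ∈ dyadicSub Q0, x ∈ Q.toSet ∧ r = oscil lam f Q}

/-- The Hardy–Littlewood maximal operator (over cubes). -/
def maximalFn {n : ℕ} (f : (Fin n → ℝ) → ℝ) (x : Fin n → ℝ) : ℝ≥0∞ :=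
  ⨆ (Q : RCube n) (_ : 0 < Q.side ∧ x ∈ Q.toSet), ENNReal.ofReal (avg (fun y => |f y|) Q)

/-- A Banach function norm on (nonnegative) functions on `ℝⁿ`, in the sense of
Bennett–Sharpley: monotone, subadditive, homogeneous, nondegenerate, with the Fatou
property, finite on indicators of sets of finite measure, and dominating local `L¹` norms. -/
structure FunctionNorm (n : ℕ) where
  ρ : ((Fin n → ℝ) → ℝ≥0∞) → ℝ≥0∞
  mono : ∀ f g, (∀ᵐ x ∂(volume : Measure (Fin n → ℝ)), f x ≤ g x) → ρ f ≤ ρ g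
  add_le : ∀ f g, ρ (fun x => f x + g x) ≤ ρ f + ρ g
  smul : ∀ (c : ℝ≥0∞) (f), ρ (fun x => c * f x) = c * ρ f
  zero_iff : ∀ f, ρ f = 0 ↔ ∀ᵐ x ∂(volume : Measure (Fin n → ℝ)), f x = 0
  fatou : ∀ f : ℕ → (Fin n → ℝ) → ℝ≥0∞, Monotone f →
    (⨆ k, ρ (f k)) = ρ (fun x => ⨆ k, f k x)
  indicator_lt_top : ∀ E : Set (Fin n → ℝ), MeasurableSet E → volume E < ⊤ →
    ρ (E.indicator fun _ => 1) < ⊤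
  setLIntegral_le : ∀ E : Set (Fin n → ℝ), MeasurableSet E → volume E < ⊤ →
    ∃ C : ℝ≥0∞, C < ⊤ ∧ ∀ f, (∫⁻ x in E, f x) ≤ C * ρ f

namespace S4

def epsZ (k : ℤ) : ℤ := if Even k then 1 else -1

lemma epsZ_succ (k : ℤ) : epsZ (k + 1) = - epsZ k := by
  by_cases h : Even k <;> simp [epsZ, h, Int.even_add_one]

lemma epsZ_cases (k : ℤ) : epsZ k = 1 ∨ epsZ k = -1 := by
  by_cases h : Even k <;> simp [epsZ, h]

variable {n : ℕ}

noncomputable def sh (t : Fin n → Bool) (k : ℤ) (i : Fin n) : ℝ :=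
  if t i then (epsZ k : ℝ) / 3 else 0

noncomputable def gcube (t : Fin n → Bool) (k : ℤ) (j : Fin n → ℤ) : RCube n :=
  ⟨fun i => 2 ^ k * ((j i : ℝ) + sh t k i), 2 ^ k⟩

def grid (t : Fin n → Bool) : Set (RCube n) :=
  {Q | ∃ k j, Q = gcube t k j}

lemma toSet_subset {Q R : RCube n} (h1 : ∀ i, R.corner i ≤ Q.corner i)
    (h2 : ∀ i, Q.corner i + Q.side ≤ R.corner i + R.side) : Q.toSet ⊆ R.toSet :=
  fun x hx i => ⟨le_trans (h1 i) ((hx i).1), lt_of_lt_of_le ((hx i).2) (h2 i)⟩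

lemma mem_gcube_iff (t : Fin n → Bool) (k : ℤ) (j : Fin n → ℤ) (x : Fin n → ℝ) :
    x ∈ (gcube t k j).toSet ↔ ∀ i, j i = ⌊x i / 2 ^ k - sh t k i⌋ := by
  have hp : (0 : ℝ) < 2 ^ k := zpow_pos two_pos k
  simp only [RCube.toSet, gcube, mem_setOf_eq]
  refine forall_congr' fun i => ?_
  rw [eq_comm, Int.floor_eq_iff]
  constructor
  · rintro ⟨h1, h2⟩
    constructor
    · have := (le_div_iff₀ hp).mpr (by linarith : ((j i : ℝ) + sh t k i) * 2 ^ k ≤ x i)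
      linarith
    · have := (div_lt_iff₀ hp).mpr (by linarith : x i < ((j i : ℝ) + sh t k i + 1) * 2 ^ k)
      linarith
  · rintro ⟨h1, h2⟩
    have ha := (le_div_iff₀ hp).mp (by linarith : ((j i : ℝ) + sh t k i) ≤ x i / 2 ^ k)
    have hb := (div_lt_iff₀ hp).mp (by linarith : x i / 2 ^ k < (j i : ℝ) + sh t k i + 1)
    constructor <;> linarith

lemma step (t : Fin n → Bool) (k : ℤ) (j : Fin n → ℤ) :
    ∃ j', (gcube t k j).toSet ⊆ (gcube t (k + 1) j').toSet := by
  have hp : (0 : ℝ) < 2 ^ k := zpow_pos two_pos k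
  set m : Fin n → ℤ := fun i => j i + (if t i then epsZ k else 0) with hm
  refine ⟨fun i => ⌊(m i : ℝ) / 2⌋, toSet_subset (fun i => ?_) (fun i => ?_)⟩ <;>
  · have h1 : (⌊(m i : ℝ) / 2⌋ : ℝ) ≤ (m i : ℝ) / 2 := Int.floor_le _
    have h2' : ((m i : ℝ)) / 2 < ⌊(m i : ℝ) / 2⌋ + 1 := Int.lt_floor_add_one _
    have h2 : (m i : ℝ) ≤ 2 * ⌊(m i : ℝ) / 2⌋ + 1 := by
      have : (m i : ℝ) < 2 * ⌊(m i : ℝ) / 2⌋ + 2 := by linarith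
      have hz : m i < 2 * ⌊(m i : ℝ) / 2⌋ + 2 := by exact_mod_cast this
      have : m i ≤ 2 * ⌊(m i : ℝ) / 2⌋ + 1 := by omega
      exact_mod_cast this
    have hk1 : (2 : ℝ) ^ (k + 1) = 2 ^ k * 2 := by rw [zpow_add_one₀ (by norm_num)]
    set J' : ℝ := (⌊(m i : ℝ) / 2⌋ : ℝ) with hJ'
    have hmr : (m i : ℝ) = (j i : ℝ) + (if t i then (epsZ k : ℝ) else 0) := by
      simp only [hm]; push_cast; split <;> simp
    simp only [gcube, sh, epsZ_succ, hk1]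
    by_cases ht : t i = true <;>
      simp only [if_pos, if_neg, ht] at hmr ⊢ <;>
    · rw [hmr] at h1 h2
      push_cast at h1 h2 ⊢
      nlinarith [hp, h1, h2]

lemma subset_up (t : Fin n → Bool) {k1 k2 : ℤ} (h : k1 ≤ k2) (j : Fin n → ℤ) :
    ∃ j', (gcube t k1 j).toSet ⊆ (gcube t k2 j').toSet := by
  obtain ⟨d, rfl⟩ : ∃ d : ℕ, k2 = k1 + d :=
    ⟨(k2 - k1).toNat, by omega⟩
  clear h
  induction d with
  | zero => exact ⟨j, by norm_num⟩
  | succ d ih =>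
    obtain ⟨j', hj'⟩ := ih
    obtain ⟨j'', hj''⟩ := step t (k1 + d) j'
    refine ⟨j'', ?_⟩
    have : (k1 : ℤ) + (d + 1 : ℕ) = k1 + d + 1 := by push_cast; ring
    rw [this]
    exact hj'.trans hj''

lemma key (t : Fin n → Bool) {k1 k2 : ℤ} (h : k1 ≤ k2) (j1 j2 : Fin n → ℤ) :
    (gcube t k1 j1).toSet ∩ (gcube t k2 j2).toSet = (gcube t k1 j1).toSet ∨
    (gcube t k1 j1).toSet ∩ (gcube t k2 j2).toSet = ∅ := by
  obtain ⟨j', hsub⟩ := subset_up t h j1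
  by_cases hne : ((gcube t k2 j').toSet ∩ (gcube t k2 j2).toSet).Nonempty
  · left
    obtain ⟨x, hx1, hx2⟩ := hne
    have hj : j' = j2 := funext fun i =>
      ((mem_gcube_iff t k2 j' x).1 hx1 i).trans ((mem_gcube_iff t k2 j2 x).1 hx2 i).symm
    rw [hj] at hsub
    exact inter_eq_left.mpr hsub
  · right
    rw [not_nonempty_iff_eq_empty] at hne
    refine eq_empty_of_subset_empty ?_
    rw [← hne]
    exact fun x hx => ⟨hsub hx.1, hx.2⟩

lemma grid_isDyadic (t : Fin n → Bool) : IsDyadicGrid (grid t) := by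
  refine ⟨?_, ?_, ?_⟩
  · rintro Q ⟨k, j, rfl⟩; exact ⟨k, rfl⟩
  · rintro Q ⟨k1, j1, rfl⟩ R ⟨k2, j2, rfl⟩
    rcases le_total k1 k2 with h | h
    · rcases key t h j1 j2 with h' | h'
      · exact Or.inl h'
      · exact Or.inr (Or.inr h')
    · rcases key t h j2 j1 with h' | h'
      · rw [inter_comm] at h'; exact Or.inr (Or.inl h')
      · rw [inter_comm] at h'; exact Or.inr (Or.inr h')
  · intro k x
    refine ⟨gcube t k (fun i => ⌊x i / 2 ^ k - sh t k i⌋),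
      ⟨⟨⟨k, _, rfl⟩, rfl⟩, (mem_gcube_iff _ _ _ _).2 fun i => rfl⟩, ?_⟩
    rintro R ⟨⟨⟨k2, j2, rfl⟩, hside⟩, hx⟩
    have hk : k2 = k := zpow_right_injective₀ (by norm_num) (by norm_num) hside
    subst hk
    have := (mem_gcube_iff t k2 j2 x).1 hx
    simp only [gcube]
    congr 1
    exact funext fun i => by rw [this i]

lemma cover1 (e : ℝ) (he : e = 1 ∨ e = -1) (k : ℤ) (c l : ℝ) (hl : 0 < l)
    (h3 : 3 * l ≤ 2 ^ k) :
    ∃ (b : Bool) (z : ℤ), 2 ^ k * ((z : ℝ) + (if b then e / 3 else 0)) ≤ c ∧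
      c + l ≤ 2 ^ k * ((z : ℝ) + (if b then e / 3 else 0)) + 2 ^ k := by
  have hp : (0 : ℝ) < 2 ^ k := zpow_pos two_pos k
  set a0 : ℤ := ⌊c / 2 ^ k⌋ with ha0
  set a1 : ℤ := ⌊c / 2 ^ k - e / 3⌋ with ha1
  have f0l : 2 ^ k * (a0 : ℝ) ≤ c := by
    have := Int.floor_le (c / 2 ^ k)
    have := (le_div_iff₀ hp).mp this
    linarith
  have f0r : c < 2 ^ k * ((a0 : ℝ) + 1) := by
    have := Int.lt_floor_add_one (c / 2 ^ k)
    have := (div_lt_iff₀ hp).mp this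
    linarith
  have f1l : 2 ^ k * ((a1 : ℝ) + e / 3) ≤ c := by
    have := Int.floor_le (c / 2 ^ k - e / 3)
    have : ((a1 : ℝ) + e / 3) ≤ c / 2 ^ k := by linarith
    have := (le_div_iff₀ hp).mp this
    linarith
  have f1r : c < 2 ^ k * ((a1 : ℝ) + e / 3 + 1) := by
    have := Int.lt_floor_add_one (c / 2 ^ k - e / 3)
    have : c / 2 ^ k < ((a1 : ℝ) + e / 3 + 1) := by linarith
    have := (div_lt_iff₀ hp).mp this
    linarith
  by_cases h0 : c + l ≤ 2 ^ k * ((a0 : ℝ) + 1)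
  · refine ⟨false, a0, by simpa using f0l, ?_⟩
    have : (if (false : Bool) then e / 3 else (0:ℝ)) = 0 := by simp
    rw [this]; linarith
  by_cases h1 : c + l ≤ 2 ^ k * ((a1 : ℝ) + e / 3 + 1)
  · refine ⟨true, a1, by simpa using f1l, ?_⟩
    have : (if (true : Bool) then e / 3 else (0:ℝ)) = e / 3 := by simp
    rw [this]; linarith
  exfalso
  push_neg at h0 h1
  set d : ℤ := a0 - a1 with hd
  have habs : (1 : ℝ) / 3 ≤ |(d : ℝ) - e / 3| := by
    rcases he with rfl | rfl
    · have hz : (1 : ℤ) ≤ |3 * d - 1| := Int.one_le_abs (by omega)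
      have hz' : (1 : ℝ) ≤ |3 * (d : ℝ) - 1| := by exact_mod_cast hz
      rcases le_abs.mp hz' with h | h
      · rw [le_abs]; left; linarith
      · rw [le_abs]; right; linarith
    · have hz : (1 : ℤ) ≤ |3 * d + 1| := Int.one_le_abs (by omega)
      have hz' : (1 : ℝ) ≤ |3 * (d : ℝ) + 1| := by exact_mod_cast hz
      rcases le_abs.mp hz' with h | h
      · rw [le_abs]; left; linarith
      · rw [le_abs]; right; linarith
  set g0 : ℝ := 2 ^ k * ((a0 : ℝ) + 1)
  set g1 : ℝ := 2 ^ k * ((a1 : ℝ) + e / 3 + 1)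
  have hdiff : g0 - g1 = 2 ^ k * ((d : ℝ) - e / 3) := by
    simp only [g0, g1, hd]; push_cast; ring
  have h2 : |g0 - g1| < l := by
    rw [abs_sub_lt_iff]
    constructor <;> linarith
  have h3' : 2 ^ k * (1 / 3) ≤ |g0 - g1| := by
    rw [hdiff, abs_mul, abs_of_pos hp]
    exact mul_le_mul_of_nonneg_left habs hp.le
  nlinarith

end S4

open S4

/-- There are `2^n` dyadic grids such that every cube `Q` is contained
in a cube `Q_i` of one of the grids with `ℓ_{Q_i} ≤ 6 ℓ_Q`. -/
theorem statement4 (n : ℕ) (hn : 1 ≤ n) :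
    ∃ D : Fin (2 ^ n) → Set (RCube n), (∀ i, IsDyadicGrid (D i)) ∧
      ∀ Q : RCube n, 0 < Q.side →
        ∃ i : Fin (2 ^ n), ∃ R ∈ D i, Q.toSet ⊆ R.toSet ∧ R.side ≤ 6 * Q.side := by
  classical
  let E : (Fin n → Bool) ≃ Fin (2 ^ n) :=
    (Equiv.arrowCongr (Equiv.refl (Fin n)) finTwoEquiv.symm).trans finFunctionFinEquiv
  refine ⟨fun i => grid (E.symm i), fun i => grid_isDyadic _, ?_⟩
  intro Q hQ
  obtain ⟨m, hm1, hm2⟩ := exists_mem_Ico_zpow (x := 3 * Q.side) (y := (2 : ℝ))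
    (by linarith) one_lt_two
  set k : ℤ := m + 1 with hk
  have h3 : 3 * Q.side ≤ (2 : ℝ) ^ k := hm2.le
  have h6 : (2 : ℝ) ^ k ≤ 6 * Q.side := by
    rw [hk, zpow_add_one₀ (by norm_num : (2:ℝ) ≠ 0)]
    linarith
  have hch : ∀ i : Fin n, ∃ (b : Bool) (z : ℤ),
      2 ^ k * ((z : ℝ) + (if b then ((epsZ k : ℝ)) / 3 else 0)) ≤ Q.corner i ∧
      Q.corner i + Q.side ≤ 2 ^ k * ((z : ℝ) + (if b then ((epsZ k : ℝ)) / 3 else 0)) + 2 ^ k := by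
    intro i
    refine cover1 _ ?_ k (Q.corner i) Q.side hQ h3
    rcases epsZ_cases k with h | h <;> simp [h]
  choose b z hz1 hz2 using hch
  refine ⟨E b, gcube b k z, ?_, ?_, ?_⟩
  · show gcube b k z ∈ grid (E.symm (E b))
    rw [E.symm_apply_apply]
    exact ⟨k, z, rfl⟩
  · refine toSet_subset (fun i => ?_) (fun i => ?_)
    · exact hz1 i
    · exact hz2 i
  · exact h6
end
end

section
/- There is a constant c depending only on n and ψ such that for every α ≥ 1, every cube Q, every k ≥ 1, and every locally integrable f, (ℓ_Q/α) ∫_{2^{k−2}ℓ_Q/α}^{2^{k+1}ℓ_Q} ∫_{2^{k+1}Q} |(f χ_{2^{k+2}Q}) * ψ_t(y)|² dy dt / t^{n+2} ≤ c α^{2n} 2^{−k} ( |2^{k+2}Q|^{−1} ∫_{2^{k+2}Q} |f| )². -/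
open MeasureTheory ENNReal Set

noncomputable section

/-! For fixed `t`, the convolution `g * ψ_t` is bounded by `‖ψ‖_∞ t⁻ⁿ ‖g‖₁` and has `L¹` norm at
most `‖g‖₁ ‖ψ‖₁`, so `∫ |g * ψ_t|² ≤ ‖ψ‖_∞ ‖ψ‖₁ ‖g‖₁² t⁻ⁿ`. Enlarging the region of integration to
all `y` and all `t > t₀ = 2^{k-2} ℓ_Q / α` and integrating `t^{-2n-2}` leaves `‖g‖₁² t₀^{-2n-1}`.
For `g = f χ_{2^{k+2}Q}` one has `‖g‖₁ = |2^{k+2}Q| · avg |f|`; the powers of `ℓ_Q` then cancel and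
those of `2` leave `2^{-k}`. -/

open scoped Convolution

namespace RCube

variable {n : ℕ}

lemma toSet_eq_pi (Q : RCube n) :
    Q.toSet = Set.pi univ fun i => Ico (Q.corner i) (Q.corner i + Q.side) := by
  ext x; simp [toSet, Set.mem_pi]

lemma measurableSet_toSet (Q : RCube n) : MeasurableSet Q.toSet := by
  rw [toSet_eq_pi]; exact .univ_pi fun _ => measurableSet_Ico

lemma volume_toSet (Q : RCube n) (h : 0 ≤ Q.side) :
    volume Q.toSet = ENNReal.ofReal (Q.side ^ n) := by
  simp [toSet_eq_pi, volume_pi_pi, Real.volume_Ico, ← ENNReal.ofReal_pow h]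

lemma toSet_subset_pi_Icc (Q : RCube n) :
    Q.toSet ⊆ Set.pi univ fun i => Icc (Q.corner i) (Q.corner i + Q.side) :=
  fun _ hx i _ => Ico_subset_Icc_self (hx i)

end RCube

variable {n : ℕ}

lemma MeasureTheory.LocallyIntegrable.integrable_indicator_toSet {f : (Fin n → ℝ) → ℝ}
    (hf : LocallyIntegrable f) (Q : RCube n) : Integrable (Q.toSet.indicator f) :=
  ((hf.integrableOn_isCompact (isCompact_univ_pi fun _ => isCompact_Icc)).mono_set
    Q.toSet_subset_pi_Icc).integrable_indicator Q.measurableSet_toSet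

lemma integral_abs_indicator_toSet (f : (Fin n → ℝ) → ℝ) {Q : RCube n} (hQ : 0 < Q.side) :
    ∫ x, |Q.toSet.indicator f x| = avg (fun y => |f y|) Q * Q.side ^ n := by
  have hQn : 0 < Q.side ^ n := pow_pos hQ n
  rw [avg, Q.volume_toSet hQ.le, ENNReal.toReal_ofReal hQn.le, mul_comm,
    mul_inv_cancel_left₀ hQn.ne', ← integral_indicator Q.measurableSet_toSet]
  congr 1 with x
  by_cases hx : x ∈ Q.toSet <;> simp [hx]

lemma convol_eq_convolution (f g : (Fin n → ℝ) → ℝ) :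
    convol f g = f ⋆[ContinuousLinearMap.lsmul ℝ ℝ] g := by
  ext y; simp [convol, convolution_def]

lemma psit_apply_eq_smul (ψ : (Fin n → ℝ) → ℝ) (t : ℝ) (x : Fin n → ℝ) :
    psit ψ t x = (t ^ n)⁻¹ * ψ (t⁻¹ • x) := by
  simp only [psit]; congr; ext i; simp [div_eq_inv_mul]

lemma MeasureTheory.Integrable.psit {ψ : (Fin n → ℝ) → ℝ} (hψ : Integrable ψ) {t : ℝ}
    (ht : t ≠ 0) : Integrable (psit ψ t) := by
  simp_rw [funext (psit_apply_eq_smul ψ t)]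
  exact (hψ.comp_smul (inv_ne_zero ht)).const_mul _

lemma integral_abs_psit (ψ : (Fin n → ℝ) → ℝ) {t : ℝ} (ht : 0 < t) :
    ∫ x, |psit ψ t x| = ∫ x, |ψ x| := by
  simp_rw [psit_apply_eq_smul, abs_mul, abs_inv, abs_pow, abs_of_pos ht]
  rw [integral_const_mul, Measure.integral_comp_inv_smul_of_nonneg volume (fun x => |ψ x|) ht.le,
    Module.finrank_fin_fun, smul_eq_mul, inv_mul_cancel_left₀ (pow_pos ht n).ne']

lemma abs_psit_le {ψ : (Fin n → ℝ) → ℝ} {C : ℝ} (hψ : ∀ x, |ψ x| ≤ C) {t : ℝ} (ht : 0 < t)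
    (x : Fin n → ℝ) : |psit ψ t x| ≤ C / t ^ n := by
  rw [psit, abs_mul, abs_inv, abs_of_pos (pow_pos ht n), inv_mul_eq_div]
  gcongr
  exact hψ _

lemma abs_convol_le {g h : (Fin n → ℝ) → ℝ} (hg : Integrable g) {M : ℝ} (hh : ∀ x, |h x| ≤ M)
    (y : Fin n → ℝ) : |convol g h y| ≤ M * ∫ ξ, |g ξ| :=
  calc |convol g h y| ≤ ∫ ξ, |g ξ * h (y - ξ)| := abs_integral_le_integral_abs
    _ ≤ ∫ ξ, |g ξ| * M :=
        integral_mono_of_nonneg (.of_forall fun _ => abs_nonneg _) (hg.abs.mul_const M)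
          (.of_forall fun ξ => (abs_mul _ _).trans_le <|
            mul_le_mul_of_nonneg_left (hh _) (abs_nonneg _))
    _ = M * ∫ ξ, |g ξ| := by rw [integral_mul_const, mul_comm]

lemma MeasureTheory.Integrable.convol {g h : (Fin n → ℝ) → ℝ} (hg : Integrable g)
    (hh : Integrable h) : Integrable (convol g h) := by
  rw [convol_eq_convolution]; exact hg.integrable_convolution _ hh

lemma integral_abs_convol_le {g h : (Fin n → ℝ) → ℝ} (hg : Integrable g) (hh : Integrable h) :
    ∫ y, |convol g h y| ≤ (∫ ξ, |g ξ|) * ∫ x, |h x| :=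
  calc ∫ y, |convol g h y| ≤ ∫ y, convol (fun ξ => |g ξ|) (fun x => |h x|) y :=
        integral_mono (hg.convol hh).abs (hg.abs.convol hh.abs) fun y =>
          abs_integral_le_integral_abs.trans_eq (by simp only [convol, abs_mul])
    _ = (∫ ξ, |g ξ|) * ∫ x, |h x| := by
        rw [convol_eq_convolution, integral_convolution _ hg.abs hh.abs]; rfl

lemma lintegral_sq_convol_le {g h : (Fin n → ℝ) → ℝ} (hg : Integrable g) (hh : Integrable h)
    {M : ℝ} (hM : ∀ x, |h x| ≤ M) :
    ∫⁻ y, ENNReal.ofReal (convol g h y ^ 2) ≤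
      ENNReal.ofReal (M * (∫ ξ, |g ξ|) ^ 2 * ∫ x, |h x|) := by
  set I := ∫ ξ, |g ξ|
  have hMI : 0 ≤ M * I := (abs_nonneg _).trans (abs_convol_le hg hM 0)
  calc ∫⁻ y, ENNReal.ofReal (convol g h y ^ 2)
      ≤ ∫⁻ y, ENNReal.ofReal (M * I * |convol g h y|) :=
        lintegral_mono fun y => ENNReal.ofReal_le_ofReal <| by
          rw [← sq_abs, sq]
          exact mul_le_mul_of_nonneg_right (abs_convol_le hg hM y) (abs_nonneg _)
    _ = ENNReal.ofReal (M * I * ∫ y, |convol g h y|) := by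
        rw [← integral_const_mul (M * I), ofReal_integral_eq_lintegral_ofReal
          ((hg.convol hh).abs.const_mul _) (.of_forall fun y => mul_nonneg hMI (abs_nonneg _))]
    _ ≤ ENNReal.ofReal (M * I ^ 2 * ∫ x, |h x|) := ENNReal.ofReal_le_ofReal <|
        (mul_le_mul_of_nonneg_left (integral_abs_convol_le hg hh) hMI).trans_eq (by ring)

lemma lintegral_sq_convol_psit_le {g ψ : (Fin n → ℝ) → ℝ} (hg : Integrable g)
    (hψ : Integrable ψ) {C : ℝ} (hψC : ∀ x, |ψ x| ≤ C) {t : ℝ} (ht : 0 < t) :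
    ∫⁻ y, ENNReal.ofReal (convol g (psit ψ t) y ^ 2) ≤
      ENNReal.ofReal (C * (∫ ξ, |g ξ|) ^ 2 * (∫ x, |ψ x|) / t ^ n) := by
  convert lintegral_sq_convol_le hg (hψ.psit ht.ne') (abs_psit_le hψC ht) using 2
  rw [integral_abs_psit ψ ht]; ring

lemma lintegral_Ioi_ofReal_div_pow_le {K t₀ : ℝ} (hK : 0 ≤ K) (ht₀ : 0 < t₀) (m : ℕ) :
    ∫⁻ t in Ioi t₀, ENNReal.ofReal (K / t ^ (m + 2)) ≤ ENNReal.ofReal (K / t₀ ^ (m + 1)) := by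
  have hr : -((m : ℝ) + 2) < -1 := by linarith [m.cast_nonneg (α := ℝ)]
  have hrpow : ∀ t : ℝ, 0 < t → ∀ k : ℕ, t ^ (-(k : ℝ)) = (t ^ k)⁻¹ := fun t ht k => by
    rw [Real.rpow_neg ht.le, Real.rpow_natCast]
  calc ∫⁻ t in Ioi t₀, ENNReal.ofReal (K / t ^ (m + 2))
      = ENNReal.ofReal (∫ t in Ioi t₀, K * t ^ (-((m : ℝ) + 2))) := by
        rw [ofReal_integral_eq_lintegral_ofReal ((integrableOn_Ioi_rpow_of_lt hr ht₀).const_mul K)]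
        · refine setLIntegral_congr_fun measurableSet_Ioi fun t ht => ?_
          rw [show (m : ℝ) + 2 = ((m + 2 : ℕ) : ℝ) by push_cast; ring,
            hrpow t (ht₀.trans ht), div_eq_mul_inv]
        · filter_upwards [ae_restrict_mem measurableSet_Ioi] with t ht
          exact mul_nonneg hK (Real.rpow_nonneg (ht₀.trans ht).le _)
    _ = ENNReal.ofReal (K / ((m + 1) * t₀ ^ (m + 1))) := by
        rw [integral_const_mul, integral_Ioi_rpow_of_lt hr ht₀,
          show -((m : ℝ) + 2) + 1 = -((m + 1 : ℕ) : ℝ) by push_cast; ring, hrpow t₀ ht₀]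
        congr 1
        push_cast
        field_simp
    _ ≤ ENNReal.ofReal (K / t₀ ^ (m + 1)) := ENNReal.ofReal_le_ofReal <|
        div_le_div_of_nonneg_left hK (by positivity)
          (le_mul_of_one_le_left (by positivity) (by linarith [m.cast_nonneg (α := ℝ)]))

lemma setLIntegral_sq_convol_psit_le {g ψ : (Fin n → ℝ) → ℝ} (hg : Integrable g)
    (hψ : Integrable ψ) {C : ℝ} (hψC : ∀ x, |ψ x| ≤ C) {t₀ : ℝ} (ht₀ : 0 < t₀) :
    ∫⁻ p in {p : (Fin n → ℝ) × ℝ | t₀ < p.2},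
        ENNReal.ofReal (convol g (psit ψ p.2) p.1 ^ 2 / p.2 ^ (n + 2)) ≤
      ENNReal.ofReal (C * (∫ ξ, |g ξ|) ^ 2 * (∫ x, |ψ x|) / t₀ ^ (2 * n + 1)) := by
  set K := C * (∫ ξ, |g ξ|) ^ 2 * ∫ x, |ψ x|
  have hK : 0 ≤ K := mul_nonneg (mul_nonneg ((abs_nonneg _).trans (hψC 0)) (sq_nonneg _))
    (integral_nonneg fun _ => abs_nonneg _)
  set F : (Fin n → ℝ) × ℝ → ℝ≥0∞ := fun p =>
    ENNReal.ofReal (convol g (psit ψ p.2) p.1 ^ 2 / p.2 ^ (n + 2))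
  have hslice : ∀ t, t₀ < t → ∫⁻ y, F (y, t) ≤ ENNReal.ofReal (K / t ^ (2 * n + 2)) :=
    fun t ht => by
      have ht' : 0 < t := ht₀.trans ht
      calc ∫⁻ y, F (y, t)
          = (∫⁻ y, ENNReal.ofReal (convol g (psit ψ t) y ^ 2)) *
              ENNReal.ofReal (t ^ (n + 2))⁻¹ := by
            simp only [F, div_eq_mul_inv, ENNReal.ofReal_mul (sq_nonneg _)]
            exact lintegral_mul_const' _ _ ENNReal.ofReal_ne_top
        _ ≤ ENNReal.ofReal (K / t ^ n) * ENNReal.ofReal (t ^ (n + 2))⁻¹ := by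
            gcongr; exact lintegral_sq_convol_psit_le hg hψ hψC ht'
        _ = ENNReal.ofReal (K / t ^ (2 * n + 2)) := by
            rw [← ENNReal.ofReal_mul (by positivity)]
            congr 1
            field_simp
            ring
  calc ∫⁻ p in {p : (Fin n → ℝ) × ℝ | t₀ < p.2}, F p
      = ∫⁻ p, F p ∂(volume.prod (volume.restrict (Ioi t₀))) := by
        rw [show {p : (Fin n → ℝ) × ℝ | t₀ < p.2} = univ ×ˢ Ioi t₀ by ext; simp,
          Measure.volume_eq_prod, ← Measure.prod_restrict, Measure.restrict_univ]
    _ = ∫⁻ q, F q.swap ∂((volume.restrict (Ioi t₀)).prod volume) :=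
        (lintegral_prod_swap F).symm
    -- Tonelli as an inequality, which needs no measurability of `F`
    _ ≤ ∫⁻ t in Ioi t₀, ∫⁻ y, F (y, t) := lintegral_prod_le _
    _ ≤ ∫⁻ t in Ioi t₀, ENNReal.ofReal (K / t ^ (2 * n + 2)) :=
        setLIntegral_mono' measurableSet_Ioi hslice
    _ ≤ ENNReal.ofReal (K / t₀ ^ (2 * n + 1)) := lintegral_Ioi_ofReal_div_pow_le hK ht₀ (2 * n)

lemma scaling_factor_eq (n k : ℕ) {ℓ α : ℝ} (hℓ : 0 < ℓ) (hα : 0 < α) :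
    ℓ / α * ((2 ^ (k + 2) * ℓ) ^ n) ^ 2 / (2 ^ ((k : ℤ) - 2) * ℓ / α) ^ (2 * n + 1) =
      2 ^ (8 * n + 2) * α ^ (2 * n) * 2 ^ (-(k : ℝ)) := by
  rw [zpow_sub₀ two_ne_zero, zpow_natCast, Real.rpow_neg zero_le_two, Real.rpow_natCast,
    show 8 * n + 2 = 2 * (4 * n + 1) by ring, pow_mul, pow_add _ k]
  norm_num
  simp only [div_pow, mul_pow]
  field_simp
  ring

theorem statement10_general {n : ℕ} (ψ : (Fin n → ℝ) → ℝ) (hψi : Integrable ψ)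
    (C : ℝ) (hψb : ∀ x, |ψ x| ≤ C) :
    ∃ c : ℝ, 0 < c ∧ ∀ α : ℝ, 1 ≤ α → ∀ Q : RCube n, 0 < Q.side → ∀ k : ℕ, 1 ≤ k →
      ∀ f : (Fin n → ℝ) → ℝ, LocallyIntegrable f volume →
        ENNReal.ofReal (Q.side / α) *
          (∫⁻ p in {p : (Fin n → ℝ) × ℝ | p.1 ∈ (Q.dilate (2 ^ (k + 1))).toSet ∧
              (2 : ℝ) ^ ((k : ℤ) - 2) * Q.side / α < p.2 ∧ p.2 < 2 ^ (k + 1) * Q.side},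
            ENNReal.ofReal ((convol ((Q.dilate (2 ^ (k + 2))).toSet.indicator f)
              (psit ψ p.2) p.1) ^ 2 / p.2 ^ (n + 2))) ≤
        ENNReal.ofReal (c * α ^ (2 * n) * (2 : ℝ) ^ (-(k : ℝ)) *
          (avg (fun y => |f y|) (Q.dilate (2 ^ (k + 2)))) ^ 2) := by
  set P := ∫ x, |ψ x|
  have hCP : 0 ≤ C * P :=
    mul_nonneg ((abs_nonneg _).trans (hψb 0)) (integral_nonneg fun _ => abs_nonneg _)
  refine ⟨(C * P + 1) * 2 ^ (8 * n + 2), by positivity, fun α hα Q hQ k _ f hf => ?_⟩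
  set R := Q.dilate (2 ^ (k + 2))
  have hR : 0 < R.side := by simp only [R, RCube.dilate]; positivity
  set t₀ : ℝ := 2 ^ ((k : ℤ) - 2) * Q.side / α with ht₀_def
  have ht₀ : 0 < t₀ := by positivity
  calc _ ≤ ENNReal.ofReal (Q.side / α) * ∫⁻ p in {p : (Fin n → ℝ) × ℝ | t₀ < p.2},
          ENNReal.ofReal (convol (R.toSet.indicator f) (psit ψ p.2) p.1 ^ 2 / p.2 ^ (n + 2)) := by
        gcongr; exact fun hp => hp.2.1
    _ ≤ ENNReal.ofReal (Q.side / α) * ENNReal.ofReal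
          (C * (∫ ξ, |R.toSet.indicator f ξ|) ^ 2 * P / t₀ ^ (2 * n + 1)) := by
        gcongr
        exact setLIntegral_sq_convol_psit_le (hf.integrable_indicator_toSet R) hψi hψb ht₀
    _ = ENNReal.ofReal (C * P * 2 ^ (8 * n + 2) * α ^ (2 * n) * (2 : ℝ) ^ (-(k : ℝ)) *
          avg (fun y => |f y|) R ^ 2) := by
        rw [← ENNReal.ofReal_mul (by positivity), integral_abs_indicator_toSet f hR]
        congr 1
        rw [show R.side = 2 ^ (k + 2) * Q.side from rfl, ht₀_def]
        linear_combination (C * P * avg (fun y => |f y|) R ^ 2) *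
          scaling_factor_eq n k hQ (zero_lt_one.trans_le hα)
    _ ≤ _ := ENNReal.ofReal_le_ofReal (by gcongr; linarith)

/-- The estimate for the term `J₁`:
`(ℓ_Q/α) ∫∫ |(fχ_{2^{k+2}Q}) * ψ_t(y)|² dy dt/t^{n+2} ≤ c α^{2n} 2^{-k} (f-average)²`. -/
theorem statement10 {n : ℕ} (hn : 1 ≤ n) (ψ : (Fin n → ℝ) → ℝ) (hψi : Integrable ψ)
    (C : ℝ) (hψb : ∀ x, |ψ x| ≤ C) :
    ∃ c : ℝ, 0 < c ∧ ∀ α : ℝ, 1 ≤ α → ∀ Q : RCube n, 0 < Q.side → ∀ k : ℕ, 1 ≤ k →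
      ∀ f : (Fin n → ℝ) → ℝ, LocallyIntegrable f volume →
        ENNReal.ofReal (Q.side / α) *
          (∫⁻ p in {p : (Fin n → ℝ) × ℝ | p.1 ∈ (Q.dilate (2 ^ (k + 1))).toSet ∧
              (2 : ℝ) ^ ((k : ℤ) - 2) * Q.side / α < p.2 ∧ p.2 < 2 ^ (k + 1) * Q.side},
            ENNReal.ofReal ((convol ((Q.dilate (2 ^ (k + 2))).toSet.indicator f)
              (psit ψ p.2) p.1) ^ 2 / p.2 ^ (n + 2))) ≤
        ENNReal.ofReal (c * α ^ (2 * n) * (2 : ℝ) ^ (-(k : ℝ)) *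
          (avg (fun y => |f y|) (Q.dilate (2 ^ (k + 2)))) ^ 2) :=
  statement10_general ψ hψi C hψb
end
end
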